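/- Let C be a core covariance matrix (a p×p symmetric positive definite matrix with P1(C, I_{p2}) = p2·I_{p1} and P2(C, I_{p1}) = p1·I_{p2}), and let H = H2 ⊛ H1 with H1 (p1×p1) and H2 (p2×p2) invertible real matrices. Then the separable positive definite matrix H Hᵀ minimizes d(K : H C Hᵀ) over all separable positive definite p×p matrices K. -/

import Mathlib

open Matrix BigOperators Filter

/-- The separable (Kronecker) product `M2 ⊛ M1`: entry at `((i,j),(i',j'))` is
`M1 i i' * M2 j j'`. -/
noncomputable def sep {p1 p2 : ℕ} (M1 : Matrix (Fin p1) (Fin p1) ℝ)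
    (M2 : Matrix (Fin p2) (Fin p2) ℝ) :
    Matrix (Fin p1 × Fin p2) (Fin p1 × Fin p2) ℝ :=
  fun x y => M1 x.1 y.1 * M2 x.2 y.2

/-- A `p × p` matrix is separable positive definite if it is the separable product of
two symmetric positive definite matrices. -/
def SepPD {p1 p2 : ℕ} (K : Matrix (Fin p1 × Fin p2) (Fin p1 × Fin p2) ℝ) : Prop :=
  ∃ (S1 : Matrix (Fin p1) (Fin p1) ℝ) (S2 : Matrix (Fin p2) (Fin p2) ℝ),
    S1.PosDef ∧ S2.PosDef ∧ K = sep S1 S2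

/-- The divergence `d(K : S) = log det K + trace (K⁻¹ S)`. -/
noncomputable def dvg {ι : Type*} [Fintype ι] [DecidableEq ι] (K S : Matrix ι ι ℝ) : ℝ :=
  Real.log K.det + (K⁻¹ * S).trace

/-- `P1 S B` has entries `∑_{j,j'} B j j' * S (i,j) (i',j')`. -/
noncomputable def P1 {p1 p2 : ℕ} (S : Matrix (Fin p1 × Fin p2) (Fin p1 × Fin p2) ℝ)
    (B : Matrix (Fin p2) (Fin p2) ℝ) : Matrix (Fin p1) (Fin p1) ℝ :=
  fun i i' => ∑ j, ∑ j', B j j' * S (i, j) (i', j')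

/-- `P2 S A` has entries `∑_{i,i'} A i i' * S (i,j) (i',j')`. -/
noncomputable def P2 {p1 p2 : ℕ} (S : Matrix (Fin p1 × Fin p2) (Fin p1 × Fin p2) ℝ)
    (A : Matrix (Fin p1) (Fin p1) ℝ) : Matrix (Fin p2) (Fin p2) ℝ :=
  fun j j' => ∑ i, ∑ i', A i i' * S (i, j) (i', j')

/-!
Conjugation by `H = H1 ⊗ₖ H2` gives `d(K : H C Hᵀ) - d(H Hᵀ : H C Hᵀ) = tr (M C) - log det M - tr C`
with `M = Hᵀ K⁻¹ H`, and for separable `K` this `M` is a Kronecker product `A ⊗ₖ B` of positive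
definite matrices. Diagonalise `A = U diag(d) Uᵀ`, `B = V diag(e) Vᵀ` and let `w` be the diagonal of
`(U ⊗ₖ V)ᵀ C (U ⊗ₖ V)`: a nonnegative weight of total mass `tr C`, with
`tr ((A ⊗ₖ B) C) = ∑ d_a e_b w_ab`. The core conditions, applied to `log A ⊗ₖ 1 + 1 ⊗ₖ log B`,
give `log det (A ⊗ₖ B) = ∑ log (d_a e_b) w_ab`, so the claim `tr C ≤ tr (M C) - log det M` is
`log t ≤ t - 1` summed against `w`.
-/

open Kronecker

section

variable {n : Type*} [Fintype n] [DecidableEq n]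

theorem Matrix.PosDef.exists_orthogonal_diagonal {A : Matrix n n ℝ} (hA : A.PosDef) :
    ∃ (U : Matrix n n ℝ) (d : n → ℝ), U * Uᵀ = 1 ∧ (∀ i, 0 < d i) ∧
      A = U * diagonal d * Uᵀ := by
  refine ⟨hA.isHermitian.eigenvectorUnitary, hA.isHermitian.eigenvalues,
    ?_, hA.eigenvalues_pos, ?_⟩
  · exact mem_unitaryGroup_iff.mp hA.isHermitian.eigenvectorUnitary.2
  · conv_lhs => rw [hA.isHermitian.spectral_theorem]
    simp [star_eq_conjTranspose]

theorem trace_orthogonal_conj_diagonal {U : Matrix n n ℝ} (hU : U * Uᵀ = 1) (d : n → ℝ) :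
    (U * diagonal d * Uᵀ).trace = ∑ i, d i := by
  rw [trace_mul_cycle, mul_eq_one_comm.mp hU, one_mul, trace_diagonal]

theorem det_orthogonal_conj_diagonal {U : Matrix n n ℝ} (hU : U * Uᵀ = 1) (d : n → ℝ) :
    (U * diagonal d * Uᵀ).det = ∏ i, d i := by
  rw [det_mul_comm, ← mul_assoc, mul_eq_one_comm.mp hU, one_mul, det_diagonal]

theorem trace_conj_diagonal_mul (W C : Matrix n n ℝ) (g : n → ℝ) :
    (W * diagonal g * Wᵀ * C).trace = ∑ x, g x * (Wᵀ * C * W) x x := by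
  rw [mul_assoc, mul_assoc, trace_mul_comm, mul_assoc]
  simp [trace, diagonal_mul]

theorem dvg_conj_eq {H K : Matrix n n ℝ} (hH : IsUnit H.det) (hK : IsUnit K.det)
    (C : Matrix n n ℝ) :
    dvg K (H * C * Hᵀ) =
      Real.log (H * Hᵀ).det + (Hᵀ * K⁻¹ * H * C).trace - Real.log (Hᵀ * K⁻¹ * H).det := by
  have h_trace : (K⁻¹ * (H * C * Hᵀ)).trace = (Hᵀ * K⁻¹ * H * C).trace := by
    simp only [← mul_assoc]
    rw [trace_mul_comm]
    simp only [mul_assoc]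
  have h_det : (H * Hᵀ).det = (Hᵀ * K⁻¹ * H).det * K.det := by
    rw [det_mul, det_mul, det_mul, det_transpose]
    linear_combination (-H.det * H.det) * K.det_nonsing_inv_mul_det hK
  have h_det_ne : (H * Hᵀ).det ≠ 0 := by
    rw [det_mul, det_transpose]
    exact mul_ne_zero hH.ne_zero hH.ne_zero
  rw [dvg, h_trace, h_det, Real.log_mul (left_ne_zero_of_mul (h_det ▸ h_det_ne)) hK.ne_zero]
  ring

theorem transpose_mul_inv_mul_transpose_mul {H : Matrix n n ℝ} (hH : IsUnit H.det) :
    Hᵀ * (H * Hᵀ)⁻¹ * H = 1 := by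
  rw [Matrix.mul_inv_rev, mul_assoc, mul_assoc, nonsing_inv_mul _ hH, mul_one,
    mul_nonsing_inv _ (isUnit_det_transpose _ hH)]

theorem Matrix.PosDef.transpose_mul_mul_same {A : Matrix n n ℝ} (hA : A.PosDef)
    {B : Matrix n n ℝ} (hB : IsUnit B.det) : (Bᵀ * A * B).PosDef :=
  hA.conjTranspose_mul_mul_same <|
    mulVec_injective_iff_isUnit.mpr ((isUnit_iff_isUnit_det B).mpr hB)

theorem Matrix.PosDef.mul_transpose_self {B : Matrix n n ℝ} (hB : IsUnit B.det) :
    (B * Bᵀ).PosDef :=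
  PosDef.mul_conjTranspose_self B <|
    vecMul_injective_iff_isUnit.mpr ((isUnit_iff_isUnit_det B).mpr hB)

end

section Kronecker

variable {m n : Type*} [Fintype m] [DecidableEq m] [Fintype n] [DecidableEq n]

theorem kronecker_conj_diagonal (U : Matrix m m ℝ) (V : Matrix n n ℝ) (d : m → ℝ) (e : n → ℝ) :
    (U * diagonal d * Uᵀ) ⊗ₖ (V * diagonal e * Vᵀ) =
      (U ⊗ₖ V) * diagonal (fun x => d x.1 * e x.2) * (U ⊗ₖ V)ᵀ := by
  rw [mul_kronecker_mul, mul_kronecker_mul, diagonal_kronecker_diagonal, kroneckerMap_transpose]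

theorem kronecker_one_add_one_kronecker_conj_diagonal {U : Matrix m m ℝ} {V : Matrix n n ℝ}
    (hU : U * Uᵀ = 1) (hV : V * Vᵀ = 1) (d : m → ℝ) (e : n → ℝ) :
    (U * diagonal d * Uᵀ) ⊗ₖ (1 : Matrix n n ℝ) + (1 : Matrix m m ℝ) ⊗ₖ (V * diagonal e * Vᵀ) =
      (U ⊗ₖ V) * diagonal (fun x => d x.1 + e x.2) * (U ⊗ₖ V)ᵀ := by
  have hV1 : V * diagonal (fun _ => 1) * Vᵀ = 1 := by rw [diagonal_one, mul_one, hV]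
  have hU1 : U * diagonal (fun _ => 1) * Uᵀ = 1 := by rw [diagonal_one, mul_one, hU]
  rw [← hV1, ← hU1, kronecker_conj_diagonal, kronecker_conj_diagonal, ← add_mul, ← mul_add,
    diagonal_add]
  simp only [mul_one, one_mul]

theorem transpose_kronecker_mul_inv_mul (A S : Matrix m m ℝ) (B T : Matrix n n ℝ) :
    (A ⊗ₖ B)ᵀ * (S ⊗ₖ T)⁻¹ * (A ⊗ₖ B) = (Aᵀ * S⁻¹ * A) ⊗ₖ (Bᵀ * T⁻¹ * B) := by
  rw [inv_kronecker, ← kroneckerMap_transpose, mul_kronecker_mul, mul_kronecker_mul]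

end Kronecker

section Core

variable {p1 p2 : ℕ}

theorem trace_kronecker_one_mul (C : Matrix (Fin p1 × Fin p2) (Fin p1 × Fin p2) ℝ)
    (M : Matrix (Fin p1) (Fin p1) ℝ) :
    (M ⊗ₖ (1 : Matrix (Fin p2) (Fin p2) ℝ) * C).trace = (M * P1 C 1).trace := by
  simp only [trace, diag_apply, mul_apply, kroneckerMap_apply, one_apply, mul_ite, mul_one,
    mul_zero, ite_mul, zero_mul, Fintype.sum_prod_type, Finset.sum_ite_eq, Finset.mem_univ,
    ↓reduceIte, P1, one_mul, Finset.mul_sum]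
  exact Finset.sum_congr rfl fun _ _ => Finset.sum_comm

theorem trace_one_kronecker_mul (C : Matrix (Fin p1 × Fin p2) (Fin p1 × Fin p2) ℝ)
    (M : Matrix (Fin p2) (Fin p2) ℝ) :
    ((1 : Matrix (Fin p1) (Fin p1) ℝ) ⊗ₖ M * C).trace = (M * P2 C 1).trace := by
  simp only [trace, diag_apply, mul_apply, kroneckerMap_apply, one_apply, ite_mul, one_mul,
    zero_mul, Fintype.sum_prod_type, Finset.sum_ite_irrel, Finset.sum_const_zero,
    Finset.sum_ite_eq, Finset.mem_univ, ↓reduceIte, P2, Finset.mul_sum]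
  rw [Finset.sum_comm]
  exact Finset.sum_congr rfl fun _ _ => Finset.sum_comm

theorem trace_kronecker_add_mul_of_core {C : Matrix (Fin p1 × Fin p2) (Fin p1 × Fin p2) ℝ}
    (hcore1 : P1 C (1 : Matrix (Fin p2) (Fin p2) ℝ) = (p2 : ℝ) • (1 : Matrix (Fin p1) (Fin p1) ℝ))
    (hcore2 : P2 C (1 : Matrix (Fin p1) (Fin p1) ℝ) = (p1 : ℝ) • (1 : Matrix (Fin p2) (Fin p2) ℝ))
    (L1 : Matrix (Fin p1) (Fin p1) ℝ) (L2 : Matrix (Fin p2) (Fin p2) ℝ) :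
    ((L1 ⊗ₖ 1 + 1 ⊗ₖ L2) * C).trace = p2 * L1.trace + p1 * L2.trace := by
  rw [add_mul, trace_add, trace_kronecker_one_mul, trace_one_kronecker_mul, hcore1, hcore2,
    mul_smul_comm, mul_smul_comm, mul_one, mul_one, trace_smul, trace_smul, smul_eq_mul,
    smul_eq_mul]

end Core

theorem sum_le_sum_mul_sub_sum_log_mul {ι : Type*} [Fintype ι] {w g : ι → ℝ}
    (hw : ∀ x, 0 ≤ w x) (hg : ∀ x, 0 < g x) :
    ∑ x, w x ≤ ∑ x, g x * w x - ∑ x, Real.log (g x) * w x := by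
  rw [← Finset.sum_sub_distrib]
  refine Finset.sum_le_sum fun x _ => ?_
  nlinarith [mul_nonneg (sub_nonneg.mpr (Real.log_le_sub_one_of_pos (hg x))) (hw x)]

theorem trace_le_trace_kronecker_mul_sub_log_det {p1 p2 : ℕ}
    {C : Matrix (Fin p1 × Fin p2) (Fin p1 × Fin p2) ℝ} (hC : C.PosSemidef)
    (hcore1 : P1 C (1 : Matrix (Fin p2) (Fin p2) ℝ) = (p2 : ℝ) • (1 : Matrix (Fin p1) (Fin p1) ℝ))
    (hcore2 : P2 C (1 : Matrix (Fin p1) (Fin p1) ℝ) = (p1 : ℝ) • (1 : Matrix (Fin p2) (Fin p2) ℝ))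
    {A : Matrix (Fin p1) (Fin p1) ℝ} {B : Matrix (Fin p2) (Fin p2) ℝ}
    (hA : A.PosDef) (hB : B.PosDef) :
    C.trace ≤ (A ⊗ₖ B * C).trace - Real.log (A ⊗ₖ B).det := by
  obtain ⟨U, d, hU, hd, rfl⟩ := hA.exists_orthogonal_diagonal
  obtain ⟨V, e, hV, he, rfl⟩ := hB.exists_orthogonal_diagonal
  set W := U ⊗ₖ V with hW_def
  have hW : W * Wᵀ = 1 := by
    rw [hW_def, ← kroneckerMap_transpose, ← mul_kronecker_mul, hU, hV, one_kronecker_one]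
  set w : Fin p1 × Fin p2 → ℝ := fun x => (Wᵀ * C * W) x x
  have hw : ∀ x, 0 ≤ w x := fun x => (hC.conjTranspose_mul_mul_same W).diag_nonneg
  have h_trace : C.trace = ∑ x, w x := by
    simpa [hW] using trace_conj_diagonal_mul W C 1
  have h_quad : ((U * diagonal d * Uᵀ) ⊗ₖ (V * diagonal e * Vᵀ) * C).trace =
      ∑ x, (d x.1 * e x.2) * w x := by
    rw [kronecker_conj_diagonal, trace_conj_diagonal_mul]
  have h_logdet : Real.log ((U * diagonal d * Uᵀ) ⊗ₖ (V * diagonal e * Vᵀ)).det =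
      ∑ x, Real.log (d x.1 * e x.2) * w x :=
    calc _ = p2 * ∑ a, Real.log (d a) + p1 * ∑ b, Real.log (e b) := by
          have hd0 : ∏ a, d a ≠ 0 := Finset.prod_ne_zero_iff.mpr fun a _ => (hd a).ne'
          have he0 : ∏ b, e b ≠ 0 := Finset.prod_ne_zero_iff.mpr fun b _ => (he b).ne'
          rw [det_kronecker, det_orthogonal_conj_diagonal hU, det_orthogonal_conj_diagonal hV,
            Real.log_mul (pow_ne_zero _ hd0) (pow_ne_zero _ he0), Real.log_pow, Real.log_pow,
            Real.log_prod fun a _ => (hd a).ne', Real.log_prod fun b _ => (he b).ne',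
            Fintype.card_fin, Fintype.card_fin]
      _ = (((U * diagonal (fun a => Real.log (d a)) * Uᵀ) ⊗ₖ 1 +
            1 ⊗ₖ (V * diagonal (fun b => Real.log (e b)) * Vᵀ)) * C).trace := by
          rw [trace_kronecker_add_mul_of_core hcore1 hcore2, trace_orthogonal_conj_diagonal hU,
            trace_orthogonal_conj_diagonal hV]
      _ = _ := by
          rw [kronecker_one_add_one_kronecker_conj_diagonal hU hV, trace_conj_diagonal_mul]
          refine Finset.sum_congr rfl fun x _ => ?_
          rw [Real.log_mul (hd x.1).ne' (he x.2).ne']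
  rw [h_trace, h_quad, h_logdet]
  exact sum_le_sum_mul_sub_sum_log_mul hw fun x => mul_pos (hd x.1) (he x.2)

theorem sep_eq_kronecker {p1 p2 : ℕ} (M1 : Matrix (Fin p1) (Fin p1) ℝ)
    (M2 : Matrix (Fin p2) (Fin p2) ℝ) : sep M1 M2 = M1 ⊗ₖ M2 := rfl

theorem stmt14_general (p1 p2 : ℕ)
    (C : Matrix (Fin p1 × Fin p2) (Fin p1 × Fin p2) ℝ) (hC : C.PosDef)
    (hcore1 : P1 C (1 : Matrix (Fin p2) (Fin p2) ℝ) = (p2 : ℝ) • (1 : Matrix (Fin p1) (Fin p1) ℝ))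
    (hcore2 : P2 C (1 : Matrix (Fin p1) (Fin p1) ℝ) = (p1 : ℝ) • (1 : Matrix (Fin p2) (Fin p2) ℝ))
    (H1 : Matrix (Fin p1) (Fin p1) ℝ) (H2 : Matrix (Fin p2) (Fin p2) ℝ)
    (hH1 : IsUnit H1.det) (hH2 : IsUnit H2.det) :
    SepPD (sep H1 H2 * (sep H1 H2)ᵀ) ∧
      ∀ K, SepPD K →
        dvg (sep H1 H2 * (sep H1 H2)ᵀ) (sep H1 H2 * C * (sep H1 H2)ᵀ) ≤
          dvg K (sep H1 H2 * C * (sep H1 H2)ᵀ) := by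
  simp only [sep_eq_kronecker]
  have hH : IsUnit (H1 ⊗ₖ H2).det := by
    rw [det_kronecker]
    exact (hH1.pow _).mul (hH2.pow _)
  have hHH : IsUnit (H1 ⊗ₖ H2 * (H1 ⊗ₖ H2)ᵀ).det := by
    rw [det_mul, det_transpose]
    exact hH.mul hH
  refine ⟨⟨H1 * H1ᵀ, H2 * H2ᵀ, .mul_transpose_self hH1, .mul_transpose_self hH2, ?_⟩, ?_⟩
  · rw [sep_eq_kronecker, ← kroneckerMap_transpose, mul_kronecker_mul]
  rintro _ ⟨S1, S2, hS1, hS2, rfl⟩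
  rw [sep_eq_kronecker]
  have hS : IsUnit (S1 ⊗ₖ S2).det := (isUnit_iff_isUnit_det _).mp (hS1.kronecker hS2).isUnit
  rw [dvg_conj_eq hH hHH, dvg_conj_eq hH hS, transpose_mul_inv_mul_transpose_mul hH, one_mul,
    det_one, Real.log_one, sub_zero, transpose_kronecker_mul_inv_mul]
  have := trace_le_trace_kronecker_mul_sub_log_det hC.posSemidef hcore1 hcore2
    (hS1.inv.transpose_mul_mul_same hH1) (hS2.inv.transpose_mul_mul_same hH2)
  linarith

theorem stmt14 (p1 p2 : ℕ) (hp1 : 0 < p1) (hp2 : 0 < p2)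
    (C : Matrix (Fin p1 × Fin p2) (Fin p1 × Fin p2) ℝ) (hC : C.PosDef)
    (hcore1 : P1 C (1 : Matrix (Fin p2) (Fin p2) ℝ) = (p2 : ℝ) • (1 : Matrix (Fin p1) (Fin p1) ℝ))
    (hcore2 : P2 C (1 : Matrix (Fin p1) (Fin p1) ℝ) = (p1 : ℝ) • (1 : Matrix (Fin p2) (Fin p2) ℝ))
    (H1 : Matrix (Fin p1) (Fin p1) ℝ) (H2 : Matrix (Fin p2) (Fin p2) ℝ)
    (hH1 : IsUnit H1.det) (hH2 : IsUnit H2.det) :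
    SepPD (sep H1 H2 * (sep H1 H2)ᵀ) ∧
      ∀ K, SepPD K →
        dvg (sep H1 H2 * (sep H1 H2)ᵀ) (sep H1 H2 * C * (sep H1 H2)ᵀ) ≤
          dvg K (sep H1 H2 * C * (sep H1 H2)ᵀ) :=
  stmt14_general p1 p2 C hC hcore1 hcore2 H1 H2 hH1 hH2
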